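/- arXiv:2001.04730 — 7 statements merged into one kernel-verified Lean document; each statement's English description precedes it below -/
import Mathlib

section
/- Let K be a field, A = K⟨X,Y⟩ the free associative K-algebra on two generators, and let I be a left A-module that is injective and contains A as an essential submodule (i.e., every nonzero submodule of I intersects A nontrivially). Then I is superdecomposable: every nonzero direct summand N of I admits a decomposition N = N₁ ⊕ N₂ with both N₁ and N₂ nonzero. In particular, I has no indecomposable direct summands. -/
/-!
A nonzero direct summand `N` of `I` is again injective, and by essentiality it contains some
`x = j a` with `a ≠ 0`; as `A = K⟨X,Y⟩` is a domain, `u ↦ u • x` embeds the left ideals `A X`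
and `A Y`, which meet trivially, into `N`. In an injective module, a maximal essential extension of
a nonzero submodule `P` is a direct summand, and it still misses any submodule disjoint from `P`;
so a second nonzero submodule disjoint from `P` forces its complement to be nonzero.
-/

universe u

open Submodule

theorem exists_maximal_disjoint {α : Type*} [CompleteLattice α] [IsCompactlyGenerated α] (a : α) :
    ∃ b, Maximal (Disjoint · a) b :=
  zorn_le₀ {b | Disjoint b a} fun _ hc hchain =>
    ⟨_, hchain.directedOn.disjoint_sSup_left.2 fun _ hb => hc hb, fun _ => le_sSup⟩

namespace Submodule

variable {R M : Type*} [Ring R] [AddCommGroup M] [Module R M]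

def IsEssentialExtension (P E : Submodule R M) : Prop :=
  P ≤ E ∧ ∀ x ∈ E, x ≠ 0 → ∃ r : R, r • x ∈ P ∧ r • x ≠ 0

theorem IsEssentialExtension.refl (P : Submodule R M) : P.IsEssentialExtension P :=
  ⟨le_rfl, fun x hx hx0 => ⟨1, by rwa [one_smul], by rwa [one_smul]⟩⟩

theorem IsEssentialExtension.trans {P E F : Submodule R M} (hPE : P.IsEssentialExtension E)
    (hEF : E.IsEssentialExtension F) : P.IsEssentialExtension F := by
  refine ⟨hPE.1.trans hEF.1, fun x hx hx0 => ?_⟩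
  obtain ⟨r, hrE, hr0⟩ := hEF.2 x hx hx0
  obtain ⟨s, hsP, hs0⟩ := hPE.2 _ hrE hr0
  exact ⟨s * r, by rwa [mul_smul], by rwa [mul_smul]⟩

theorem IsEssentialExtension.disjoint {P E Q : Submodule R M} (hPE : P.IsEssentialExtension E)
    (hPQ : Disjoint P Q) : Disjoint E Q := by
  rw [disjoint_def] at hPQ ⊢
  intro x hxE hxQ
  by_contra hx0
  obtain ⟨r, hrP, hr0⟩ := hPE.2 x hxE hx0
  exact hr0 (hPQ _ hrP (Q.smul_mem r hxQ))

theorem exists_maximal_isEssentialExtension (P : Submodule R M) :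
    ∃ E, Maximal P.IsEssentialExtension E := by
  obtain ⟨E, -, hE⟩ := zorn_le_nonempty₀ {E | P.IsEssentialExtension E}
    (fun c hc hchain y hy => ⟨sSup c, ⟨(hc hy).1.trans (le_sSup hy), fun x hx hx0 => by
        obtain ⟨E, hEc, hxE⟩ := (mem_sSup_of_directed ⟨y, hy⟩ hchain.directedOn).1 hx
        exact (hc hEc).2 x hxE hx0⟩, fun _ => le_sSup⟩) P (IsEssentialExtension.refl P)
  exact ⟨E, hE⟩

theorem exists_smul_sub_mem_of_maximal_disjoint {E S : Submodule R M}
    (hS : Maximal (Disjoint · E) S) {x : M} (hx : x ∉ S) :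
    ∃ r : R, ∃ e ∈ E, e ≠ 0 ∧ r • x - e ∈ S := by
  have hmeet : ¬Disjoint (S ⊔ span R {x}) E := fun h =>
    hx (hS.2 h le_sup_left (mem_sup_right (mem_span_singleton_self x)))
  obtain ⟨e, ⟨heSx, heE⟩, he0⟩ := (Submodule.ne_bot_iff _).1 (mt disjoint_iff.2 hmeet)
  obtain ⟨s, hs, y, hy, rfl⟩ := mem_sup.1 heSx
  obtain ⟨r, rfl⟩ := mem_span_singleton.1 hy
  exact ⟨r, _, heE, he0, by simpa using S.neg_mem hs⟩

theorem exists_isCompl_of_maximal_isEssentialExtension [Module.Injective R M]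
    {P E : Submodule R M} (hE : Maximal P.IsEssentialExtension E) : ∃ F, IsCompl E F := by
  obtain ⟨S, hS⟩ := exists_maximal_disjoint E
  -- extend the inclusion `E ↪ M` along `E ↪ M ⧸ S` to get an endomorphism `π` of `M`
  have hinj : Function.Injective (S.mkQ ∘ₗ E.subtype) := by
    rw [← LinearMap.domRestrict, LinearMap.injective_domRestrict_iff, ker_mkQ]
    exact hS.1.symm
  obtain ⟨g, hg⟩ := Module.Injective.out (S.mkQ ∘ₗ E.subtype) hinj E.subtype
  set π := g ∘ₗ S.mkQ
  have hπE : ∀ e ∈ E, π e = e := fun e he => hg ⟨e, he⟩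
  have hπS : ∀ s ∈ S, π s = 0 := fun s hs => by
    simp [π, (Quotient.mk_eq_zero S).2 hs]
  have hrange : E.IsEssentialExtension (LinearMap.range π) := by
    refine ⟨fun e he => ⟨e, hπE e he⟩, ?_⟩
    rintro _ ⟨x, rfl⟩ hx0
    obtain ⟨r, e, heE, he0, hs⟩ := exists_smul_sub_mem_of_maximal_disjoint hS
      fun hxS => hx0 (hπS x hxS)
    have hre : r • π x = e := by
      rw [← map_smul, ← sub_add_cancel (r • x) e, map_add, hπS _ hs, hπE e heE, zero_add]
    exact ⟨r, hre ▸ heE, hre ▸ he0⟩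
  have hπ_le : LinearMap.range π ≤ E := hE.2 (hE.1.trans hrange) hrange.1
  exact ⟨_, LinearMap.isCompl_of_proj (f := π.codRestrict E fun x => hπ_le ⟨x, rfl⟩)
    fun e => Subtype.ext (hπE e e.2)⟩

end Submodule

namespace Module.Injective

variable {R M : Type*} [Ring R] [AddCommGroup M] [Module R M]

theorem of_isCompl [Module.Injective R M] {N N' : Submodule R M} (h : IsCompl N N') :
    Module.Injective R N where
  out X Y _ _ _ _ f hf g := by
    obtain ⟨g', hg'⟩ := Module.Injective.out f hf (N.subtype ∘ₗ g)
    exact ⟨N.projectionOnto N' h ∘ₗ g', fun x => by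
      simp [hg', Submodule.projectionOnto_apply_left]⟩

theorem exists_isCompl_of_disjoint [Module.Injective R M]
    {P Q : Submodule R M} (hP : P ≠ ⊥) (hQ : Q ≠ ⊥) (hPQ : Disjoint P Q) :
    ∃ E F : Submodule R M, IsCompl E F ∧ E ≠ ⊥ ∧ F ≠ ⊥ := by
  obtain ⟨E, hE⟩ := Submodule.exists_maximal_isEssentialExtension P
  obtain ⟨F, hEF⟩ := Submodule.exists_isCompl_of_maximal_isEssentialExtension hE
  refine ⟨E, F, hEF, ne_bot_of_le_ne_bot hP hE.1.1, fun hF => hQ ?_⟩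
  have hEtop : E = ⊤ := by simpa [hF] using hEF.sup_eq_top
  simpa [hEtop] using (hE.1.disjoint hPQ)

end Module.Injective

namespace FreeAlgebra

variable {R X : Type*} [CommSemiring R]

theorem eq_zero_of_mul_ι_eq_mul_ι {i j : X} (hij : i ≠ j) {u v : FreeAlgebra R X}
    (h : u * ι R i = v * ι R j) : u = 0 := by
  classical
  set e := equivMonoidAlgebraFreeMonoid (R := R) (X := X)
  have hι : ∀ k, e (ι R k) = MonoidAlgebra.single (FreeMonoid.of k) (1 : R) := fun k => by
    simp [e, equivMonoidAlgebraFreeMonoid, MonoidAlgebra.of_apply]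
  -- every word in the support of `u * ι R i` ends in the letter `i`
  have hsupp := congrArg (fun p => p.coeff.support) (congrArg e h)
  simp only [map_mul, hι] at hsupp
  rw [MonoidAlgebra.support_coeff_mul_single _ _ (fun y => by simp),
    MonoidAlgebra.support_coeff_mul_single _ _ (fun y => by simp)] at hsupp
  by_contra hu
  obtain ⟨w, hw⟩ : (e u).coeff.support.Nonempty :=
    Finsupp.support_nonempty_iff.2 (MonoidAlgebra.coeff_eq_zero.not.2 (e.map_ne_zero_iff.2 hu))
  obtain ⟨w', -, hw'⟩ := Finset.mem_map.1 (hsupp ▸ Finset.mem_map_of_mem _ hw)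
  have hlast := congrArg (fun w => (FreeMonoid.toList w).getLast?) hw'
  simp only [mulRightEmbedding_apply, FreeMonoid.toList_mul, FreeMonoid.toList_of,
    List.getLast?_append, List.getLast?_singleton, Option.some_or, Option.some.injEq] at hlast
  exact hij hlast.symm

theorem disjoint_span_ι {i j : X} (hij : i ≠ j) :
    Disjoint (Submodule.span (FreeAlgebra R X) {ι R i}) (Submodule.span _ {ι R j}) := by
  rw [Submodule.disjoint_def]
  rintro _ hu hv
  obtain ⟨u, rfl⟩ := Submodule.mem_span_singleton.1 hu
  obtain ⟨v, hv⟩ := Submodule.mem_span_singleton.1 hv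
  rw [eq_zero_of_mul_ι_eq_mul_ι hij hv.symm, zero_smul]

end FreeAlgebra

/-- An injective left module over the free algebra `K⟨X,Y⟩` containing the algebra as an
essential submodule is superdecomposable: every nonzero direct summand decomposes
nontrivially. -/
theorem superdecomposable_injective_envelope
    (K : Type u) [Field K]
    (I : Type u) [AddCommGroup I] [Module (FreeAlgebra K (Fin 2)) I]
    (hInj : Module.Injective (FreeAlgebra K (Fin 2)) I)
    (j : FreeAlgebra K (Fin 2) →ₗ[FreeAlgebra K (Fin 2)] I)
    (hj : Function.Injective j)
    (hess : ∀ N : Submodule (FreeAlgebra K (Fin 2)) I, N ≠ ⊥ → N ⊓ LinearMap.range j ≠ ⊥) :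
    ∀ N : Submodule (FreeAlgebra K (Fin 2)) I, N ≠ ⊥ → (∃ N', IsCompl N N') →
      ∃ N₁ N₂ : Submodule (FreeAlgebra K (Fin 2)) I,
        N₁ ≠ ⊥ ∧ N₂ ≠ ⊥ ∧ N₁ ⊓ N₂ = ⊥ ∧ N₁ ⊔ N₂ = N := by
  rintro N hN ⟨N', hNN'⟩
  have := Module.Injective.of_isCompl hNN'
  obtain ⟨_, ⟨hjaN, a, rfl⟩, hja⟩ := (Submodule.ne_bot_iff _).1 (hess N hN)
  set f := LinearMap.toSpanSingleton (FreeAlgebra K (Fin 2)) N ⟨j a, hjaN⟩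
  have hf : Function.Injective f := by
    refine (injective_iff_map_eq_zero f).2 fun u hu => ?_
    have hua : j (u * a) = 0 := by simpa [f, ← smul_eq_mul] using congrArg Subtype.val hu
    exact (mul_eq_zero.1 (hj (hua.trans j.map_zero.symm))).resolve_right
      fun ha => hja (by rw [ha, map_zero])
  have hι (i : Fin 2) : (span _ {FreeAlgebra.ι K i}).map f ≠ ⊥ := by
    rw [(map_injective_of_injective hf).ne_iff' (map_bot f), Ne, span_singleton_eq_bot]
    exact FreeAlgebra.ι_ne_zero i
  obtain ⟨E, F, hEF, hE, hF⟩ := Module.Injective.exists_isCompl_of_disjoint (hι 0) (hι 1)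
    (disjoint_map hf (FreeAlgebra.disjoint_span_ι (by decide)))
  refine ⟨E.map N.subtype, F.map N.subtype, ?_, ?_, ?_, ?_⟩
  · rwa [(map_injective_of_injective N.injective_subtype).ne_iff' (map_bot _)]
  · rwa [(map_injective_of_injective N.injective_subtype).ne_iff' (map_bot _)]
  · rw [← map_inf _ N.injective_subtype, hEF.inf_eq_bot, Submodule.map_bot]
  · rw [← Submodule.map_sup, hEF.sup_eq_top, map_subtype_top]
end

section
/- Let K be a field and A = K⟨X,Y⟩ the free associative K-algebra on two generators X and Y. For every nonzero element a of A, the left ideals A·X·a and A·Y·a intersect trivially: A X a ∩ A Y a = {0}. -/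
universe u

open FreeAlgebra in
/-- If `c * X = d * Y` in the monoid algebra picture, both sides vanish, since words
ending in `0` differ from words ending in `1`. -/
lemma aux_mul_single_eq_zero {K : Type u} [Field K]
    (f g : MonoidAlgebra K (FreeMonoid (Fin 2)))
    (h : f * MonoidAlgebra.single (FreeMonoid.of (0 : Fin 2)) (1 : K)
        = g * MonoidAlgebra.single (FreeMonoid.of (1 : Fin 2)) (1 : K)) :
    f * MonoidAlgebra.single (FreeMonoid.of (0 : Fin 2)) (1 : K) = 0 := by
  ext w
  have key : ¬(∃ d, w = d * FreeMonoid.of (0 : Fin 2)) ∨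
      ¬(∃ d, w = d * FreeMonoid.of (1 : Fin 2)) := by
    by_contra hc
    push_neg at hc
    obtain ⟨⟨d, hd⟩, ⟨e, he⟩⟩ := hc
    have : FreeMonoid.toList w = FreeMonoid.toList d ++ [(0 : Fin 2)] := by
      rw [hd]; simp
    have h2 : FreeMonoid.toList w = FreeMonoid.toList e ++ [(1 : Fin 2)] := by
      rw [he]; simp
    have := congrArg List.getLast? (this.symm.trans h2)
    rw [List.getLast?_concat, List.getLast?_concat] at this
    simp at this
  rcases key with hk | hk
  · rw [MonoidAlgebra.mul_single_apply_of_not_exists_mul _ _ hk]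
    simp
  · rw [h, MonoidAlgebra.mul_single_apply_of_not_exists_mul _ _ hk]
    simp

lemma aux_free_alg {K : Type u} [Field K] (c d : FreeAlgebra K (Fin 2))
    (h : c * FreeAlgebra.ι K (0 : Fin 2) = d * FreeAlgebra.ι K (1 : Fin 2)) :
    c * FreeAlgebra.ι K (0 : Fin 2) = 0 := by
  set e := FreeAlgebra.equivMonoidAlgebraFreeMonoid (R := K) (X := Fin 2) with he
  have hι : ∀ i : Fin 2, e (FreeAlgebra.ι K i)
      = MonoidAlgebra.single (FreeMonoid.of i) (1 : K) := by
    intro i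
    simp [he, FreeAlgebra.equivMonoidAlgebraFreeMonoid, MonoidAlgebra.of_apply]
  have h' : e c * MonoidAlgebra.single (FreeMonoid.of (0 : Fin 2)) (1 : K)
      = e d * MonoidAlgebra.single (FreeMonoid.of (1 : Fin 2)) (1 : K) := by
    rw [← hι 0, ← hι 1, ← map_mul, ← map_mul, h]
  have h0 := aux_mul_single_eq_zero (e c) (e d) h'
  rw [← hι 0, ← map_mul] at h0
  have := e.injective (h0.trans (map_zero e).symm)
  exact this

/-- In the free algebra `A = K⟨X,Y⟩`, for every nonzero `a` the left ideals `A·X·a` and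
`A·Y·a` intersect trivially. -/
theorem free_algebra_left_ideals_trivial_intersection
    (K : Type u) [Field K] (a : FreeAlgebra K (Fin 2)) (ha : a ≠ 0) :
    Submodule.span (FreeAlgebra K (Fin 2)) {FreeAlgebra.ι K (0 : Fin 2) * a} ⊓
      Submodule.span (FreeAlgebra K (Fin 2)) {FreeAlgebra.ι K (1 : Fin 2) * a} = ⊥ := by
  rw [eq_bot_iff]
  intro x hx
  obtain ⟨hx0, hx1⟩ := Submodule.mem_inf.mp hx
  rw [Submodule.mem_span_singleton] at hx0 hx1
  obtain ⟨c, hc⟩ := hx0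
  obtain ⟨d, hd⟩ := hx1
  rw [smul_eq_mul] at hc hd
  have hcd : (c * FreeAlgebra.ι K (0 : Fin 2) - d * FreeAlgebra.ι K (1 : Fin 2)) * a = 0 := by
    rw [sub_mul, mul_assoc, mul_assoc, hc, hd, sub_self]
  have hsub : c * FreeAlgebra.ι K (0 : Fin 2) - d * FreeAlgebra.ι K (1 : Fin 2) = 0 := by
    rcases mul_eq_zero.mp hcd with h | h
    · exact h
    · exact absurd h ha
  have h0 := aux_free_alg c d (sub_eq_zero.mp hsub)
  rw [Submodule.mem_bot, ← hc, ← mul_assoc, h0, zero_mul]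
end

section
/- An abelian group A is torsion-free (no nonzero element of A has finite order) if and only if A embeds into a direct product of (possibly infinitely many) copies of ℚ, i.e., there is an index set J and an injective additive group homomorphism A → ℚ^J. -/
universe u

theorem Module.Free.exists_injective_linearMap_pi (R : Type*) (M : Type u) [Semiring R]
    [AddCommMonoid M] [Module R M] [Module.Free R M] :
    ∃ (J : Type u) (f : M →ₗ[R] J → R), Function.Injective f :=
  ⟨_, Finsupp.lcoeFun ∘ₗ (Module.Free.chooseBasis R M).repr.toLinearMap,
    DFunLike.coe_injective.comp (Module.Free.chooseBasis R M).repr.injective⟩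

/-- An abelian group is torsion-free if and only if it embeds into a direct product of
copies of `ℚ`. -/
theorem isTorsionFree_iff_embeds_in_product_of_rat (A : Type u) [AddCommGroup A] :
    (∀ g : A, g ≠ 0 → ¬IsOfFinAddOrder g) ↔
      ∃ (J : Type u) (f : A →+ (J → ℚ)), Function.Injective f := by
  rw [← isAddTorsionFree_iff_not_isOfFinAddOrder]
  constructor
  · intro _
    obtain ⟨J, f, hf⟩ := Module.Free.exists_injective_linearMap_pi ℚ (DivisibleHull A)
    exact ⟨J, f.toAddMonoidHom.comp (DivisibleHull.coeAddMonoidHom A),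
      hf.comp DivisibleHull.coe_injective⟩
  · rintro ⟨J, f, hf⟩
    exact hf.isAddTorsionFree f
end

section
/- Let K be an algebraically closed field, Λ a finite-dimensional K-algebra, and M a projective Λ-module. Then ^⊥(M^⊥) = Gen(M): a Λ-module X satisfies Hom_Λ(X,Y) = 0 for all Y with Hom_Λ(M,Y) = 0 if and only if X is a quotient of a direct sum of copies of M. -/
universe u

open LinearMap

section

variable {R : Type*} [Ring R] {M X Y : Type*} [AddCommGroup M] [Module R M]
  [AddCommGroup X] [Module R X] [AddCommGroup Y] [Module R Y]

theorem Finsupp.range_le_range_lsum {ι : Type*} (φ : ι → M →ₗ[R] X) (i : ι) :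
    range (φ i) ≤ range (Finsupp.lsum ℕ φ) := by
  rintro _ ⟨m, rfl⟩
  exact ⟨Finsupp.single i m, by simp⟩

theorem Finsupp.hom_eq_zero_of_forall_eq_zero {ι : Type*} (hY : ∀ g : M →ₗ[R] Y, g = 0)
    (φ : (ι →₀ M) →ₗ[R] Y) : φ = 0 :=
  Finsupp.lhom_ext' fun i => by rw [hY (φ.comp (Finsupp.lsingle i)), zero_comp]

theorem LinearMap.eq_zero_of_surjective_finsupp {ι : Type*} {p : (ι →₀ M) →ₗ[R] X}
    (hp : Function.Surjective p) (hY : ∀ g : M →ₗ[R] Y, g = 0) (f : X →ₗ[R] Y) : f = 0 :=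
  (cancel_right hp).1 <| by rw [zero_comp]; exact Finsupp.hom_eq_zero_of_forall_eq_zero hY _

/-- Every map `M → X ⧸ N` lifts to `X`, and the lift lands in `N`. -/
theorem Module.Projective.hom_to_quotient_eq_zero [Module.Projective R M] {N : Submodule R X}
    (hN : ∀ f : M →ₗ[R] X, range f ≤ N) (g : M →ₗ[R] X ⧸ N) : g = 0 := by
  obtain ⟨l, rfl⟩ := Module.projective_lifting_property N.mkQ g N.mkQ_surjective
  exact range_le_ker_iff.1 (by rw [Submodule.ker_mkQ]; exact hN l)

end

theorem perp_perp_eq_gen_of_projective_general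
    (Λ : Type u) [Ring Λ]
    (M : Type u) [AddCommGroup M] [Module Λ M] (hM : Module.Projective Λ M)
    (X : Type u) [AddCommGroup X] [Module Λ X] :
    (∀ (Y : Type u) [AddCommGroup Y] [Module Λ Y],
        (∀ g : M →ₗ[Λ] Y, g = 0) → ∀ f : X →ₗ[Λ] Y, f = 0) ↔
      ∃ (ι : Type u) (p : (ι →₀ M) →ₗ[Λ] X), Function.Surjective p := by
  constructor
  · intro hX
    -- The evaluation map `⊕_{f : M → X} M → X` is onto: its cokernel lies in `M^⊥`.
    let p := Finsupp.lsum ℕ fun f : M →ₗ[Λ] X => f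
    have hcoker : (range p).mkQ = 0 :=
      hX _ (hM.hom_to_quotient_eq_zero (Finsupp.range_le_range_lsum _)) _
    refine ⟨M →ₗ[Λ] X, p, range_eq_top.1 ?_⟩
    rwa [← Submodule.ker_mkQ (range p), ker_eq_top]
  · rintro ⟨ι, p, hp⟩ Y _ _ hY
    exact eq_zero_of_surjective_finsupp hp hY

/-- For a projective module `M` over a finite-dimensional algebra, `^⊥(M^⊥) = Gen M`:
a module `X` has no nonzero maps to modules in `M^⊥` if and only if `X` is a quotient of
a direct sum of copies of `M`. -/
theorem perp_perp_eq_gen_of_projective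
    (K : Type u) [Field K] [IsAlgClosed K]
    (Λ : Type u) [Ring Λ] [Algebra K Λ] [FiniteDimensional K Λ]
    (M : Type u) [AddCommGroup M] [Module Λ M] (hM : Module.Projective Λ M)
    (X : Type u) [AddCommGroup X] [Module Λ X] :
    (∀ (Y : Type u) [AddCommGroup Y] [Module Λ Y],
        (∀ g : M →ₗ[Λ] Y, g = 0) → ∀ f : X →ₗ[Λ] Y, f = 0) ↔
      ∃ (ι : Type u) (p : (ι →₀ M) →ₗ[Λ] X), Function.Surjective p :=
  perp_perp_eq_gen_of_projective_general Λ M hM X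
end

section
/- Let K be an algebraically closed field and Λ a finite-dimensional K-algebra. Every Λ-module X is a pure submodule of the direct product of its finite-dimensional quotient modules: the canonical map from X to the product over all submodules U ⊆ X of finite codimension of the quotients X/U is injective, and its image is a pure submodule of the product. -/
universe u

open scoped DirectSum

/-- A module `M` over `Λ` is indecomposable if it is nonzero and any direct sum
decomposition of `M` has a zero summand. -/
def IsIndecomposableModule (Λ : Type u) [Ring Λ] (M : ModuleCat.{u} Λ) : Prop :=
  (∃ x : M, x ≠ 0) ∧
    ∀ M₁ M₂ : ModuleCat.{u} Λ,
      Nonempty ((M : Type u) ≃ₗ[Λ] Prod (M₁ : Type u) (M₂ : Type u)) →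
        (∀ x : M₁, x = 0) ∨ (∀ x : M₂, x = 0)

/-- A `Λ`-module is finite-dimensional if it is finite-dimensional as a `K`-vector space
(via restriction of scalars along `K → Λ`). -/
def IsFinDimModule (K Λ : Type u) [Field K] [Ring Λ] [Algebra K Λ]
    (M : ModuleCat.{u} Λ) : Prop :=
  @FiniteDimensional K (RestrictScalars K Λ M) _ _ (RestrictScalars.module K Λ M)

/-- A torsion class in `Mod Λ`: a class of modules closed under isomorphisms, arbitrary
direct sums, quotients and extensions. -/
def IsTorsionClass (Λ : Type u) [Ring Λ] (T : Set (ModuleCat.{u} Λ)) : Prop :=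
  (∀ M N : ModuleCat.{u} Λ, Nonempty ((M : Type u) ≃ₗ[Λ] (N : Type u)) → M ∈ T → N ∈ T) ∧
  (∀ (ι : Type u) (F : ι → ModuleCat.{u} Λ), (∀ i, F i ∈ T) →
      ModuleCat.of Λ (⨁ i, (F i : Type u)) ∈ T) ∧
  (∀ M N : ModuleCat.{u} Λ, M ∈ T →
      (∃ p : (M : Type u) →ₗ[Λ] (N : Type u), Function.Surjective p) → N ∈ T) ∧
  (∀ A B C : ModuleCat.{u} Λ, A ∈ T → C ∈ T →
      (∃ (f : (A : Type u) →ₗ[Λ] (B : Type u)) (g : (B : Type u) →ₗ[Λ] (C : Type u)),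
        Function.Injective f ∧ Function.Surjective g ∧ LinearMap.range f = LinearMap.ker g) →
      B ∈ T)

/-- A torsion class in `mod Λ` (finite-dimensional modules): a class of finite-dimensional
modules closed under isomorphisms, finite direct sums, quotients and extensions. -/
def IsSmallTorsionClass (K Λ : Type u) [Field K] [Ring Λ] [Algebra K Λ]
    (U : Set (ModuleCat.{u} Λ)) : Prop :=
  (∀ M ∈ U, IsFinDimModule K Λ M) ∧
  (∀ M N : ModuleCat.{u} Λ, Nonempty ((M : Type u) ≃ₗ[Λ] (N : Type u)) → M ∈ U → N ∈ U) ∧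
  (∀ (n : ℕ) (F : Fin n → ModuleCat.{u} Λ), (∀ i, F i ∈ U) →
      ModuleCat.of Λ (⨁ i, (F i : Type u)) ∈ U) ∧
  (∀ M N : ModuleCat.{u} Λ, M ∈ U →
      (∃ p : (M : Type u) →ₗ[Λ] (N : Type u), Function.Surjective p) → N ∈ U) ∧
  (∀ A B C : ModuleCat.{u} Λ, A ∈ U → C ∈ U →
      (∃ (f : (A : Type u) →ₗ[Λ] (B : Type u)) (g : (B : Type u) →ₗ[Λ] (C : Type u)),
        Function.Injective f ∧ Function.Surjective g ∧ LinearMap.range f = LinearMap.ker g) →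
      B ∈ U)

/-- A torsion pair in `Mod Λ`. -/
def IsTorsionPair (Λ : Type u) [Ring Λ] (T F : Set (ModuleCat.{u} Λ)) : Prop :=
  (∀ A ∈ T, ∀ B ∈ F, ∀ φ : (A : Type u) →ₗ[Λ] (B : Type u), φ = 0) ∧
  (∀ X : ModuleCat.{u} Λ,
    ∃ (A B : ModuleCat.{u} Λ) (i : (A : Type u) →ₗ[Λ] (X : Type u))
      (p : (X : Type u) →ₗ[Λ] (B : Type u)),
      A ∈ T ∧ B ∈ F ∧ Function.Injective i ∧ Function.Surjective p ∧
        LinearMap.range i = LinearMap.ker p)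

/-- A torsion pair in `mod Λ` (finite-dimensional modules). -/
def IsSmallTorsionPair (K Λ : Type u) [Field K] [Ring Λ] [Algebra K Λ]
    (U V : Set (ModuleCat.{u} Λ)) : Prop :=
  (∀ M ∈ U, IsFinDimModule K Λ M) ∧ (∀ M ∈ V, IsFinDimModule K Λ M) ∧
  (∀ A ∈ U, ∀ B ∈ V, ∀ φ : (A : Type u) →ₗ[Λ] (B : Type u), φ = 0) ∧
  (∀ X : ModuleCat.{u} Λ, IsFinDimModule K Λ X →
    ∃ (A B : ModuleCat.{u} Λ) (i : (A : Type u) →ₗ[Λ] (X : Type u))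
      (p : (X : Type u) →ₗ[Λ] (B : Type u)),
      A ∈ U ∧ B ∈ V ∧ Function.Injective i ∧ Function.Surjective p ∧
        LinearMap.range i = LinearMap.ker p)

/-- `Gen M`: the class of modules which are quotients of (possibly infinite) direct sums
of copies of `M`. -/
def GenClass (Λ : Type u) [Ring Λ] (M : ModuleCat.{u} Λ) : Set (ModuleCat.{u} Λ) :=
  {X | ∃ (ι : Type u) (p : (ι →₀ (M : Type u)) →ₗ[Λ] (X : Type u)), Function.Surjective p}

/-- `Gen U` for a class `U`: quotients of direct sums of modules in `U`. -/
def GenClassOfSet (Λ : Type u) [Ring Λ] (U : Set (ModuleCat.{u} Λ)) :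
    Set (ModuleCat.{u} Λ) :=
  {X | ∃ (ι : Type u) (F : ι → ModuleCat.{u} Λ)
        (p : (⨁ i, (F i : Type u)) →ₗ[Λ] (X : Type u)),
        (∀ i, F i ∈ U) ∧ Function.Surjective p}

/-- `gen M`: the class of finite-dimensional modules which are quotients of finite direct
sums of copies of `M`. -/
def SmallGenClass (K Λ : Type u) [Field K] [Ring Λ] [Algebra K Λ]
    (M : ModuleCat.{u} Λ) : Set (ModuleCat.{u} Λ) :=
  {X | IsFinDimModule K Λ X ∧
        ∃ (n : ℕ) (p : (Fin n → (M : Type u)) →ₗ[Λ] (X : Type u)), Function.Surjective p}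

/-- `U^⊥`: the class of modules receiving no nonzero map from members of `U`. -/
def PerpClass (Λ : Type u) [Ring Λ] (U : Set (ModuleCat.{u} Λ)) : Set (ModuleCat.{u} Λ) :=
  {Y | ∀ A ∈ U, ∀ φ : (A : Type u) →ₗ[Λ] (Y : Type u), φ = 0}

/-- `lim U`: the class of modules which are direct limits (filtered colimits) of directed
systems of modules in `U`. -/
def LimClass (Λ : Type u) [Ring Λ] (U : Set (ModuleCat.{u} Λ)) : Set (ModuleCat.{u} Λ) :=
  {X | ∃ (ι : Type u) (r : ι → ι → Prop),
    Nonempty ι ∧ (∀ i, r i i) ∧ (∀ i j k, r i j → r j k → r i k) ∧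
    (∀ i j, ∃ k, r i k ∧ r j k) ∧
    ∃ (F : ι → ModuleCat.{u} Λ)
      (f : ∀ i j, r i j → ((F i : Type u) →ₗ[Λ] (F j : Type u)))
      (g : ∀ i, (F i : Type u) →ₗ[Λ] (X : Type u)),
      (∀ i, F i ∈ U) ∧
      (∀ i (h : r i i), f i i h = LinearMap.id) ∧
      (∀ i j k (hij : r i j) (hjk : r j k) (hik : r i k),
          (f j k hjk).comp (f i j hij) = f i k hik) ∧
      (∀ i j (h : r i j), (g j).comp (f i j h) = g i) ∧
      (∀ x : X, ∃ i y, g i y = x) ∧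
      (∀ i (y : F i), g i y = 0 → ∃ (j : ι) (h : r i j), f i j h y = 0)}

/-- Purity of a submodule, via the standard characterisation by finite systems of linear
equations (equivalent to injectivity of `Z ⊗ Y → Z ⊗ X` for all right modules `Z`). -/
def IsPureSubmodule (Λ : Type u) [Ring Λ] {X : Type u} [AddCommGroup X] [Module Λ X]
    (Y : Submodule Λ X) : Prop :=
  ∀ (m n : ℕ) (a : Fin m → Fin n → Λ) (y : Fin m → Y),
    (∃ x : Fin n → X, ∀ i, ∑ j, a i j • x j = (y i : X)) →
    ∃ x' : Fin n → Y, ∀ i, ∑ j, a i j • (x' j : X) = (y i : X)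


/-! For a `K`-linear map `f` on a `Λ`-module `M`, the largest submodule inside `ker f`,
`{x | ∀ r, f (r • x) = 0}`, has finite codimension when `f` has finite-dimensional target:
modulo it, `M` embeds into `Hom_K(Λ, V)`. Taking `f` a functional shows that these submodules
separate points. For purity, if a system `∑ⱼ aᵢⱼ cⱼ = bᵢ` has no solution in `M`, a functional on
`Mᵐ` separates `b` from the image of `c ↦ a c`; the kernel core `U` of its coordinates then has
finite codimension and the system has no solution in `M ⧸ U` either, hence none in the product. -/

namespace LinearMap

section

variable {K M V : Type*} (Λ : Type*) [Semiring K] [Semiring Λ] [AddCommMonoid M] [Module K M]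
  [Module Λ M] [AddCommMonoid V] [Module K V]

/-- The largest `Λ`-submodule of `M` contained in `ker f`. -/
def kerCore (f : M →ₗ[K] V) : Submodule Λ M where
  carrier := {x | ∀ r : Λ, f (r • x) = 0}
  add_mem' hx hy r := by simp [smul_add, hx r, hy r]
  zero_mem' r := by simp
  smul_mem' s x hx r := by simpa [mul_smul] using hx (r * s)

variable {Λ} {f : M →ₗ[K] V} {x : M}

theorem mem_kerCore : x ∈ f.kerCore Λ ↔ ∀ r : Λ, f (r • x) = 0 := Iff.rfl

theorem apply_eq_zero_of_mem_kerCore (hx : x ∈ f.kerCore Λ) : f x = 0 := by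
  simpa using hx 1

end

variable {K Λ M V : Type*} [Field K] [Ring Λ] [Algebra K Λ] [AddCommGroup M] [Module K M]
  [Module Λ M] [IsScalarTower K Λ M] [AddCommGroup V] [Module K V]

theorem finiteDimensional_quotient_kerCore [FiniteDimensional K Λ] [FiniteDimensional K V]
    (f : M →ₗ[K] V) : FiniteDimensional K (M ⧸ f.kerCore Λ) := by
  let G : M →ₗ[K] Λ →ₗ[K] V := llcomp K Λ M V f ∘ₗ (Algebra.lsmul K K M).toLinearMap.flip
  have hG : (f.kerCore Λ).restrictScalars K = ker G := by
    ext x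
    simp [G, mem_kerCore, LinearMap.ext_iff]
  exact ((Submodule.Quotient.restrictScalarsEquiv K _).symm ≪≫ₗ
    Submodule.quotEquivOfEq _ _ hG ≪≫ₗ G.quotKerEquivRange).symm.finiteDimensional

end LinearMap

section

variable (K Λ : Type*) {M : Type*} [Field K] [Ring Λ] [Algebra K Λ] [AddCommGroup M] [Module K M]
  [Module Λ M] [IsScalarTower K Λ M] [FiniteDimensional K Λ]

open LinearMap

theorem eq_zero_of_forall_mem_of_finiteDimensional_quotient {x : M}
    (h : ∀ U : Submodule Λ M, FiniteDimensional K (M ⧸ U) → x ∈ U) : x = 0 :=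
  (Module.forall_dual_apply_eq_zero_iff K x).1 fun f =>
    apply_eq_zero_of_mem_kerCore (h _ (finiteDimensional_quotient_kerCore f))

variable {Λ}

theorem exists_solution_of_forall_finiteDimensional_quotient {m n : ℕ} (a : Fin m → Fin n → Λ)
    (b : Fin m → M)
    (h : ∀ U : Submodule Λ M, FiniteDimensional K (M ⧸ U) →
      ∃ ξ : Fin n → M ⧸ U, ∀ i, ∑ j, a i j • ξ j = U.mkQ (b i)) :
    ∃ c : Fin n → M, ∀ i, ∑ j, a i j • c j = b i := by
  classical
  let L : (Fin n → M) →ₗ[K] Fin m → M :=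
    pi fun i => ∑ j, Algebra.lsmul K K M (a i j) ∘ₗ proj j
  suffices b ∈ range L by
    obtain ⟨c, hc⟩ := this
    exact ⟨c, fun i => by simpa [L] using congrFun hc i⟩
  by_contra hbL
  obtain ⟨f, hfb, hfL⟩ := Submodule.exists_dual_map_eq_bot_of_notMem hbL inferInstance
  let g : M →ₗ[K] Fin m → K := pi fun i => f ∘ₗ single K (fun _ => M) i
  obtain ⟨ξ, hξ⟩ := h (g.kerCore Λ) (finiteDimensional_quotient_kerCore g)
  choose c hc using fun j => Submodule.mkQ_surjective _ (ξ j)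
  have hcore : ∀ i, L c i - b i ∈ g.kerCore Λ := fun i => by
    rw [← Submodule.Quotient.eq, ← Submodule.mkQ_apply, ← Submodule.mkQ_apply, ← hξ i]
    simp [L, ← hc]
  have hfLc : f (L c) = 0 :=
    (Submodule.mem_bot K).1 (hfL ▸ Submodule.mem_map_of_mem (mem_range_self L c))
  have hf : f (L c - b) = 0 := by
    rw [← Finset.univ_sum_single (L c - b), map_sum]
    exact Finset.sum_eq_zero fun i _ => congrFun (apply_eq_zero_of_mem_kerCore (hcore i)) i
  exact hfb (by simpa [hfLc] using hf)

end

theorem LinearMap.isPureSubmodule_range {Λ M N : Type u} [Ring Λ] [AddCommGroup M] [Module Λ M]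
    [AddCommGroup N] [Module Λ N] (φ : M →ₗ[Λ] N)
    (h : ∀ (m n : ℕ) (a : Fin m → Fin n → Λ) (b : Fin m → M),
      (∃ x : Fin n → N, ∀ i, ∑ j, a i j • x j = φ (b i)) →
        ∃ c : Fin n → M, ∀ i, ∑ j, a i j • c j = b i) :
    IsPureSubmodule Λ (LinearMap.range φ) := by
  intro m n a y hy
  choose b hb using fun i => LinearMap.mem_range.1 (y i).2
  obtain ⟨c, hc⟩ := h m n a b (by simpa only [hb] using hy)
  exact ⟨fun j => ⟨φ (c j), LinearMap.mem_range_self φ (c j)⟩, fun i => by simp [← hb, ← hc]⟩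

theorem RestrictScalars.finiteDimensional_iff {K Λ M : Type*} [Field K] [Ring Λ] [Algebra K Λ]
    [AddCommGroup M] [Module K M] [Module Λ M] [IsScalarTower K Λ M] :
    @FiniteDimensional K (RestrictScalars K Λ M) _ _ (RestrictScalars.module K Λ M) ↔
      FiniteDimensional K M := by
  have : RestrictScalars.module K Λ M = ‹Module K M› := by
    ext k x
    exact algebraMap_smul Λ k (show M from x)
  rw [this]
  exact Iff.rfl

theorem pure_embedding_in_product_of_finite_dimensional_quotients_general
    (K : Type u) [Field K]
    (Λ : Type u) [Ring Λ] [Algebra K Λ] [FiniteDimensional K Λ]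
    (X : Type u) [AddCommGroup X] [Module Λ X] :
    Function.Injective
      (LinearMap.pi
        (fun U : {U : Submodule Λ X // @FiniteDimensional K (RestrictScalars K Λ (X ⧸ U)) _ _
            (RestrictScalars.module K Λ (X ⧸ U))} =>
          U.val.mkQ)) ∧
    IsPureSubmodule Λ
      (LinearMap.range
        (LinearMap.pi
          (fun U : {U : Submodule Λ X // @FiniteDimensional K (RestrictScalars K Λ (X ⧸ U)) _ _
            (RestrictScalars.module K Λ (X ⧸ U))} =>
            U.val.mkQ))) := by
  let : Module K X := Module.restrictScalars K Λ X
  have : IsScalarTower K Λ X := IsScalarTower.restrictScalars K Λ X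
  have hfd (U : Submodule Λ X) (hU : FiniteDimensional K (X ⧸ U)) :
      @FiniteDimensional K (RestrictScalars K Λ (X ⧸ U)) _ _ (RestrictScalars.module K Λ (X ⧸ U)) :=
    RestrictScalars.finiteDimensional_iff.2 hU
  refine ⟨fun x y hxy => ?_, LinearMap.isPureSubmodule_range _ fun m n a b ⟨x, hx⟩ => ?_⟩
  · rw [← sub_eq_zero]
    refine eq_zero_of_forall_mem_of_finiteDimensional_quotient K Λ fun U hU => ?_
    simpa [sub_eq_zero, Submodule.Quotient.eq] using congrFun hxy ⟨U, hfd U hU⟩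
  · refine exists_solution_of_forall_finiteDimensional_quotient K a b fun U hU => ?_
    exact ⟨fun j => x j ⟨U, hfd U hU⟩, fun i => by simpa using congrFun (hx i) ⟨U, hfd U hU⟩⟩

/-- Every module over a finite-dimensional algebra is a pure submodule of the product of
its finite-dimensional quotients: the canonical map to the product of all quotients by
submodules of finite codimension is injective with pure image. -/
theorem pure_embedding_in_product_of_finite_dimensional_quotients
    (K : Type u) [Field K] [IsAlgClosed K]
    (Λ : Type u) [Ring Λ] [Algebra K Λ] [FiniteDimensional K Λ]
    (X : Type u) [AddCommGroup X] [Module Λ X] :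
    Function.Injective
      (LinearMap.pi
        (fun U : {U : Submodule Λ X // @FiniteDimensional K (RestrictScalars K Λ (X ⧸ U)) _ _
            (RestrictScalars.module K Λ (X ⧸ U))} =>
          U.val.mkQ)) ∧
    IsPureSubmodule Λ
      (LinearMap.range
        (LinearMap.pi
          (fun U : {U : Submodule Λ X // @FiniteDimensional K (RestrictScalars K Λ (X ⧸ U)) _ _
            (RestrictScalars.module K Λ (X ⧸ U))} =>
            U.val.mkQ))) :=
  pure_embedding_in_product_of_finite_dimensional_quotients_general K Λ X
end

section
/- Let K be an algebraically closed field, Λ a finite-dimensional K-algebra, and U a torsion class in mod(Λ). Then lim U is closed under pure submodules, and lim U is closed under arbitrary direct products if and only if U = gen(N) for some finite-dimensional Λ-module N. -/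
universe u

open scoped DirectSum

/-! Since `U` is closed under quotients and finite sums, a module lies in `lim U` iff each of its
elements lies in a submodule belonging to `U`. A submodule `S ∈ U` is finitely presented, so purity
of `Y ⊆ X` lets one solve the relations of `S` inside `Y`: this gives a map `S → Y` whose image, a
quotient of `S`, contains a prescribed element of `Y`.

If `U = gen N`, every element of `∏ Gᵢ` is the value at a fixed `K`-basis `w ∈ N^d` of some map
`N^d → ∏ Gᵢ`, whose image lies in `gen N`. Conversely, if `lim U` is closed under products, the
tautological element of the product of all modules of `U` (at all their elements) lies in some
`S ∈ U`; then every module of `U` is generated by images of maps from `S`, so `U = gen S`. -/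

open scoped ModuleCat

theorem IsPureSubmodule.exists_lift {R X M : Type u} [Ring R] [AddCommGroup X] [Module R X]
    [AddCommGroup M] [Module R M] [Module.FinitePresentation R M] {Y : Submodule R X}
    (hY : IsPureSubmodule R Y) (g : M →ₗ[R] X) (m : M) (hm : g m ∈ Y) :
    ∃ f : M →ₗ[R] Y, (f m : X) = g m := by
  obtain ⟨n, P, e, hP⟩ := Module.FinitePresentation.exists_fin R M
  obtain ⟨k, r, rfl⟩ := Submodule.fg_iff_exists_fin_generating_family.1 hP
  obtain ⟨c, hc⟩ := Submodule.mkQ_surjective _ (e m)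
  set φ : (Fin n → R) →ₗ[R] X := g ∘ₗ e.symm.toLinearMap ∘ₗ (Submodule.span R (Set.range r)).mkQ
  have hφ : ∀ v, ∑ j, v j • φ (Pi.single j 1) = φ v := by
    intro v
    conv_rhs => rw [← Finset.univ_sum_single v, map_sum]
    refine Finset.sum_congr rfl fun j _ => ?_
    rw [← map_smul, ← Pi.single_smul', smul_eq_mul, mul_one]
  have hφr : ∀ i, φ (r i) = 0 := fun i => by
    simp [φ, (Submodule.Quotient.mk_eq_zero _).2 (Submodule.subset_span (Set.mem_range_self i))]
  have hφc : φ c = g m := by simp [φ, hc]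
  -- Row `0` says `Σ cⱼ xⱼ = g m`, the other rows that `x` satisfies the relations `r` of `M`.
  obtain ⟨x', hx'⟩ := hY (k + 1) n (Fin.cons c r) (Fin.cons ⟨g m, hm⟩ 0)
    ⟨fun j => φ (Pi.single j 1), Fin.cases (by simpa [hφ] using hφc)
      (fun i => by simpa [hφ] using hφr i)⟩
  set ψ := Fintype.linearCombination R x'
  have hψr : Submodule.span R (Set.range r) ≤ LinearMap.ker ψ := by
    refine Submodule.span_le.2 (Set.range_subset_iff.2 fun i => ?_)
    exact Subtype.ext (by simpa [ψ, Fintype.linearCombination_apply] using hx' i.succ)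
  refine ⟨(Submodule.span R (Set.range r)).liftQ ψ hψr ∘ₗ e.toLinearMap, ?_⟩
  simpa [← hc, ψ, Fintype.linearCombination_apply] using hx' 0

theorem exists_surjective_pi_of_forall_exists_apply_eq {R S M : Type u} [Ring R]
    [AddCommGroup S] [Module R S] [AddCommGroup M] [Module R M] [Module.Finite R M]
    (h : ∀ m : M, ∃ (f : S →ₗ[R] M) (s : S), f s = m) :
    ∃ (k : ℕ) (p : (Fin k → S) →ₗ[R] M), Function.Surjective p := by
  obtain ⟨k, gen, hgen⟩ := Module.Finite.exists_fin (R := R) (M := M)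
  choose f s hfs using fun j => h (gen j)
  refine ⟨k, ∑ j, f j ∘ₗ LinearMap.proj j, ?_⟩
  rw [← LinearMap.range_eq_top, eq_top_iff, ← hgen, Submodule.span_le]
  rintro _ ⟨j, rfl⟩
  exact ⟨Pi.single j (s j), by simp [Pi.single_apply, apply_ite, hfs]⟩

theorem exists_apply_eq_apply_of_span_eq_top {K Λ N G : Type u} [Field K] [Ring Λ]
    [Algebra K Λ] [AddCommGroup N] [Module Λ N] [Module K N] [IsScalarTower K Λ N]
    [AddCommGroup G] [Module Λ G] [Module K G] [IsScalarTower K Λ G] {d : ℕ} {w : Fin d → N}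
    (hw : Submodule.span K (Set.range w) = ⊤) {n : ℕ} (ψ : (Fin n → N) →ₗ[Λ] G)
    (v : Fin n → N) : ∃ φ : (Fin d → N) →ₗ[Λ] G, φ w = ψ v := by
  -- `K` acts centrally, so the values `φ w` form a `K`-subspace of `G`.
  let evalW : ((Fin d → N) →ₗ[Λ] G) →ₗ[K] G :=
    { toFun := fun φ => φ w, map_add' := fun _ _ => rfl, map_smul' := fun _ _ => rfl }
  have hmem : ∀ (χ : N →ₗ[Λ] G) (y : N), χ y ∈ LinearMap.range evalW := by
    intro χ y
    have hle : Submodule.span K (Set.range w) ≤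
        (LinearMap.range evalW).comap (χ.restrictScalars K) :=
      Submodule.span_le.2 (Set.range_subset_iff.2 fun l => ⟨χ ∘ₗ LinearMap.proj l, rfl⟩)
    exact hle (hw ▸ Submodule.mem_top)
  obtain ⟨φ, hφ⟩ : ψ v ∈ LinearMap.range evalW := by
    rw [← Finset.univ_sum_single v, map_sum]
    exact Submodule.sum_mem _ fun j _ => hmem (ψ ∘ₗ LinearMap.single Λ (fun _ => N) j) (v j)
  exact ⟨φ, hφ⟩

namespace IsSmallTorsionClass

variable {K Λ : Type u} [Field K] [Ring Λ] [Algebra K Λ] {U : Set (ModuleCat.{u} Λ)}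

theorem iSup_mem (hU : IsSmallTorsionClass K Λ U) {X : Type u} [AddCommGroup X]
    [Module Λ X] {n : ℕ} (S : Fin n → Submodule Λ X) (hS : ∀ i, ModuleCat.of Λ (S i) ∈ U) :
    ModuleCat.of Λ ↥(⨆ i, S i) ∈ U := by
  let σ : (⨁ i, (ModuleCat.of Λ (S i) : Type u)) →ₗ[Λ] X :=
    DirectSum.toModule Λ (Fin n) X fun i => (S i).subtype
  have hσ : LinearMap.range σ = ⨆ i, S i := (Submodule.iSup_eq_range_dfinsupp_lsum S).symm
  rw [← hσ]
  exact hU.2.2.2.1 _ _ (hU.2.2.1 n _ hS) ⟨σ.rangeRestrict, σ.surjective_rangeRestrict⟩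

theorem mem_limClass_iff (hU : IsSmallTorsionClass K Λ U) (X : ModuleCat.{u} Λ) :
    X ∈ LimClass Λ U ↔ ∀ x : X, ∃ S : Submodule Λ X, x ∈ S ∧ ModuleCat.of Λ S ∈ U := by
  constructor
  · rintro ⟨ι, r, -, -, -, -, F, f, g, hFU, -, -, -, hsurj, -⟩ x
    obtain ⟨i, y, rfl⟩ := hsurj x
    exact ⟨LinearMap.range (g i), ⟨y, rfl⟩,
      hU.2.2.2.1 (F i) _ (hFU i) ⟨(g i).rangeRestrict, (g i).surjective_rangeRestrict⟩⟩
  · intro h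
    obtain ⟨S₀, -, hS₀⟩ := h 0
    refine ⟨{S : Submodule Λ X // ModuleCat.of Λ S ∈ U}, (·.1 ≤ ·.1), ⟨⟨S₀, hS₀⟩⟩,
      fun _ => le_rfl, fun _ _ _ => le_trans, ?_, fun S => ModuleCat.of Λ S.1,
      fun _ _ h => Submodule.inclusion h, fun S => S.1.subtype, fun S => S.2, fun _ _ => rfl,
      fun _ _ _ _ _ _ => rfl, fun _ _ _ => rfl, ?_, ?_⟩
    · rintro ⟨S, hS⟩ ⟨T, hT⟩
      exact ⟨⟨⨆ i, ![S, T] i, hU.iSup_mem _ (Fin.forall_fin_two.2 ⟨hS, hT⟩)⟩,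
        le_iSup ![S, T] 0, le_iSup ![S, T] 1⟩
    · intro x
      obtain ⟨S, hx, hS⟩ := h x
      exact ⟨⟨S, hS⟩, ⟨x, hx⟩, rfl⟩
    · exact fun S y hy => ⟨S, le_rfl, Subtype.ext hy⟩

theorem mem_limClass_of_mem (hU : IsSmallTorsionClass K Λ U) {M : ModuleCat.{u} Λ}
    (hM : M ∈ U) : M ∈ LimClass Λ U :=
  (hU.mem_limClass_iff M).2 fun _ =>
    ⟨⊤, Submodule.mem_top, hU.2.1 _ _ ⟨Submodule.topEquiv.symm⟩ hM⟩

end IsSmallTorsionClass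

theorem isFinDimModule_iff_finite {K Λ : Type u} [Field K] [Ring Λ] [Algebra K Λ]
    [FiniteDimensional K Λ] (M : ModuleCat.{u} Λ) :
    IsFinDimModule K Λ M ↔ Module.Finite Λ M := by
  change FiniteDimensional K M ↔ _
  exact ⟨fun _ => Module.Finite.of_restrictScalars_finite K Λ M, fun _ => Module.Finite.trans Λ M⟩

namespace IsSmallTorsionClass

variable {K Λ : Type u} [Field K] [Ring Λ] [Algebra K Λ] [FiniteDimensional K Λ]
  {U : Set (ModuleCat.{u} Λ)}

theorem finite_of_mem (hU : IsSmallTorsionClass K Λ U) {M : ModuleCat.{u} Λ} (hM : M ∈ U) :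
    Module.Finite Λ M :=
  (isFinDimModule_iff_finite M).1 (hU.1 M hM)

theorem mem_limClass_of_isPureSubmodule (hU : IsSmallTorsionClass K Λ U)
    {X : ModuleCat.{u} Λ} {Y : Submodule Λ X} (hX : X ∈ LimClass Λ U)
    (hY : IsPureSubmodule Λ Y) : ModuleCat.of Λ Y ∈ LimClass Λ U := by
  have : IsNoetherianRing Λ := isNoetherian_of_tower K inferInstance
  rw [hU.mem_limClass_iff] at hX ⊢
  intro y
  obtain ⟨S, hyS, hSU⟩ := hX y
  have : Module.Finite Λ S := hU.finite_of_mem hSU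
  have := Module.finitePresentation_of_finite Λ S
  obtain ⟨f, hf⟩ := hY.exists_lift S.subtype ⟨y, hyS⟩ y.2
  exact ⟨LinearMap.range f, ⟨⟨y, hyS⟩, Subtype.ext hf⟩,
    hU.2.2.2.1 _ _ hSU ⟨f.rangeRestrict, f.surjective_rangeRestrict⟩⟩

theorem pi_mem_limClass_of_eq_smallGenClass (hU : IsSmallTorsionClass K Λ U)
    {N : ModuleCat.{u} Λ} (hN : IsFinDimModule K Λ N) (hUN : U = SmallGenClass K Λ N)
    {ι : Type u} (G : ι → ModuleCat.{u} Λ) (hG : ∀ i, G i ∈ LimClass Λ U) :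
    ModuleCat.of Λ (∀ i, G i) ∈ LimClass Λ U := by
  have : FiniteDimensional K N := hN
  have : Module.Finite Λ N := (isFinDimModule_iff_finite N).1 hN
  obtain ⟨d, w, hw⟩ := Module.Finite.exists_fin (R := K) (M := N)
  have hφ : ∀ (i : ι) (x : G i), ∃ φ : (Fin d → N) →ₗ[Λ] G i, φ w = x := by
    intro i x
    obtain ⟨S, hxS, hSU⟩ := (hU.mem_limClass_iff (G i)).1 (hG i) x
    rw [hUN] at hSU
    obtain ⟨-, n, p, hp⟩ := hSU
    obtain ⟨v, hv⟩ := hp ⟨x, hxS⟩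
    obtain ⟨φ, hφ⟩ := exists_apply_eq_apply_of_span_eq_top hw (S.subtype ∘ₗ p) v
    exact ⟨φ, hφ.trans (congrArg Subtype.val hv)⟩
  rw [hU.mem_limClass_iff]
  intro x
  choose φ hφ using fun i => hφ i (x i)
  let Θ := LinearMap.pi φ
  refine ⟨LinearMap.range Θ, ⟨w, funext hφ⟩, ?_⟩
  rw [hUN]
  exact ⟨(isFinDimModule_iff_finite _).2 (Module.Finite.range Θ), d, Θ.rangeRestrict,
    Θ.surjective_rangeRestrict⟩

theorem exists_eq_smallGenClass_of_pi_mem_limClass (hU : IsSmallTorsionClass K Λ U)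
    (hprod : ∀ (ι : Type u) (G : ι → ModuleCat.{u} Λ), (∀ i, G i ∈ LimClass Λ U) →
      ModuleCat.of Λ (∀ i, G i) ∈ LimClass Λ U) :
    ∃ N : ModuleCat.{u} Λ, IsFinDimModule K Λ N ∧ U = SmallGenClass K Λ N := by
  -- Every module of `U` is isomorphic to some `Λⁿ ⧸ P`, so these quotients index `U`.
  let ι := {P : Σ n, Submodule Λ (Fin n → Λ) // ModuleCat.of Λ ((Fin P.1 → Λ) ⧸ P.2) ∈ U}
  let G : (Σ i : ι, (Fin i.1.1 → Λ) ⧸ i.1.2) → ModuleCat.{u} Λ :=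
    fun a => ModuleCat.of Λ ((Fin a.1.1.1 → Λ) ⧸ a.1.1.2)
  let x : ∀ a, G a := fun a => a.2
  obtain ⟨S, hxS, hSU⟩ := (hU.mem_limClass_iff _).1
    (hprod _ G fun a => hU.mem_limClass_of_mem a.1.2) x
  refine ⟨ModuleCat.of Λ S, hU.1 _ hSU, subset_antisymm (fun M hM => ?_) ?_⟩
  · have := hU.finite_of_mem hM
    obtain ⟨n, π, hπ⟩ := Module.Finite.exists_fin' Λ M
    let e := π.quotKerEquivOfSurjective hπ
    let i : ι := ⟨⟨n, LinearMap.ker π⟩, hU.2.1 _ _ ⟨e.symm⟩ hM⟩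
    exact ⟨hU.1 M hM, exists_surjective_pi_of_forall_exists_apply_eq fun m =>
      ⟨e.toLinearMap ∘ₗ LinearMap.proj (φ := fun a => G a) ⟨i, e.symm m⟩ ∘ₗ S.subtype,
        ⟨x, hxS⟩, by simp [x]⟩⟩
  · rintro M ⟨-, k, p, hp⟩
    let sumEquiv := DirectSum.linearEquivFunOnFintype Λ (Fin k) fun _ => S
    exact hU.2.2.2.1 _ M (hU.2.2.1 k (fun _ => ModuleCat.of Λ S) fun _ => hSU)
      ⟨p ∘ₗ sumEquiv.toLinearMap, hp.comp sumEquiv.surjective⟩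

end IsSmallTorsionClass

theorem lim_of_small_torsion_class_pure_and_products_general
    (K : Type u) [Field K]
    (Λ : Type u) [Ring Λ] [Algebra K Λ] [FiniteDimensional K Λ]
    (U : Set (ModuleCat.{u} Λ)) (hU : IsSmallTorsionClass K Λ U) :
    (∀ (X : ModuleCat.{u} Λ) (Y : Submodule Λ (X : Type u)),
        X ∈ LimClass Λ U → IsPureSubmodule Λ Y → ModuleCat.of Λ ↥Y ∈ LimClass Λ U) ∧
    ((∀ (ι : Type u) (G : ι → ModuleCat.{u} Λ), (∀ i, G i ∈ LimClass Λ U) →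
          ModuleCat.of Λ (∀ i, (G i : Type u)) ∈ LimClass Λ U) ↔
        ∃ N : ModuleCat.{u} Λ, IsFinDimModule K Λ N ∧ U = SmallGenClass K Λ N) :=
  ⟨fun _ _ hX hY => hU.mem_limClass_of_isPureSubmodule hX hY,
    hU.exists_eq_smallGenClass_of_pi_mem_limClass,
    fun ⟨_, hN, hUN⟩ _ G hG => hU.pi_mem_limClass_of_eq_smallGenClass hN hUN G hG⟩

/-- For a torsion class `U` in `mod Λ`, the class `lim U` is closed under pure
submodules, and it is closed under arbitrary products if and only if `U = gen N` for
some finite-dimensional module `N`. -/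
theorem lim_of_small_torsion_class_pure_and_products
    (K : Type u) [Field K] [IsAlgClosed K]
    (Λ : Type u) [Ring Λ] [Algebra K Λ] [FiniteDimensional K Λ]
    (U : Set (ModuleCat.{u} Λ)) (hU : IsSmallTorsionClass K Λ U) :
    (∀ (X : ModuleCat.{u} Λ) (Y : Submodule Λ (X : Type u)),
        X ∈ LimClass Λ U → IsPureSubmodule Λ Y → ModuleCat.of Λ ↥Y ∈ LimClass Λ U) ∧
    ((∀ (ι : Type u) (G : ι → ModuleCat.{u} Λ), (∀ i, G i ∈ LimClass Λ U) →
          ModuleCat.of Λ (∀ i, (G i : Type u)) ∈ LimClass Λ U) ↔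
        ∃ N : ModuleCat.{u} Λ, IsFinDimModule K Λ N ∧ U = SmallGenClass K Λ N) :=
  lim_of_small_torsion_class_pure_and_products_general K Λ U hU
end

section
/- Let R = ℤ localized at the prime ideal (2), i.e., the subring {a/b ∈ ℚ : b odd} of ℚ. Every torsion class in the category of finitely generated R-modules is one of exactly three classes: the zero class {0}, the class of all finitely generated R-modules, and the class of finitely generated torsion R-modules (finitely generated modules with nonzero annihilator). -/
/-!
`R` is the localisation of `ℤ` at `(2)`, hence a discrete valuation ring `A` with uniformiser `π`.
Let `T` be a torsion class. If some `M ∈ T` has an element `x` with zero annihilator, then `x`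
survives in the free module `M ⧸ torsion`, so a coordinate function maps `M` onto `A`; thus
`A ∈ T`, and so is every finitely generated module, being a quotient of some `Aⁿ`. Otherwise `T`
consists of torsion modules, and a nonzero member has a simple quotient, the residue field
`A ⧸ (π)`. The extensions `0 → A ⧸ (πᵏ) → A ⧸ (πᵏ⁺¹) → A ⧸ (π) → 0` then put every `A ⧸ (πᵏ)`
in `T`, and by the structure theorem every finitely generated torsion module is a finite direct
sum of these.
-/

/-- A torsion class in the category of finitely generated `R`-modules: a class of
finitely generated modules closed under isomorphisms, finite direct sums, quotients and
extensions. -/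
def IsFGTorsionClass (R : Type) [Ring R] (U : Set (ModuleCat.{0} R)) : Prop :=
  (∀ M ∈ U, Module.Finite R M) ∧
  (∀ M N : ModuleCat.{0} R, Nonempty ((M : Type) ≃ₗ[R] (N : Type)) → M ∈ U → N ∈ U) ∧
  (∀ (n : ℕ) (F : Fin n → ModuleCat.{0} R), (∀ i, F i ∈ U) →
      ModuleCat.of R (DirectSum (Fin n) (fun i => (F i : Type))) ∈ U) ∧
  (∀ M N : ModuleCat.{0} R, M ∈ U →
      (∃ p : (M : Type) →ₗ[R] (N : Type), Function.Surjective p) → N ∈ U) ∧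
  (∀ A B C : ModuleCat.{0} R, A ∈ U → C ∈ U →
      (∃ (f : (A : Type) →ₗ[R] (B : Type)) (g : (B : Type) →ₗ[R] (C : Type)),
        Function.Injective f ∧ Function.Surjective g ∧ LinearMap.range f = LinearMap.ker g) →
      B ∈ U)

def zeroModules (A : Type) [Ring A] : Set (ModuleCat.{0} A) := {M | ∀ x : M, x = 0}

def fgModules (A : Type) [Ring A] : Set (ModuleCat.{0} A) := {M | Module.Finite A M}

def fgTorsionModules (A : Type) [CommRing A] : Set (ModuleCat.{0} A) :=
  {M | Module.Finite A M ∧ ∀ x : M, ∃ r : A, r ≠ 0 ∧ r • x = 0}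

namespace IsFGTorsionClass

section Ring

variable {A : Type} [Ring A] {T : Set (ModuleCat.{0} A)}
variable {M N P : Type} [AddCommGroup M] [Module A M] [AddCommGroup N] [Module A N]
  [AddCommGroup P] [Module A P]

theorem mem_of_linearEquiv (hT : IsFGTorsionClass A T) (e : M ≃ₗ[A] N)
    (hM : ModuleCat.of A M ∈ T) : ModuleCat.of A N ∈ T :=
  hT.2.1 _ _ ⟨e⟩ hM

theorem mem_of_surjective (hT : IsFGTorsionClass A T) {f : M →ₗ[A] N}
    (hf : Function.Surjective f) (hM : ModuleCat.of A M ∈ T) : ModuleCat.of A N ∈ T :=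
  hT.2.2.2.1 _ (.of A N) hM ⟨f, hf⟩

theorem mem_of_exact (hT : IsFGTorsionClass A T) {f : M →ₗ[A] N} {g : N →ₗ[A] P}
    (hf : Function.Injective f) (hg : Function.Surjective g) (hfg : Function.Exact f g)
    (hM : ModuleCat.of A M ∈ T) (hP : ModuleCat.of A P ∈ T) : ModuleCat.of A N ∈ T :=
  hT.2.2.2.2 _ (.of A N) _ hM hP ⟨f, g, hf, hg, hfg.linearMap_ker_eq.symm⟩

theorem mem_of_subsingleton (hT : IsFGTorsionClass A T) [Subsingleton M] :
    ModuleCat.of A M ∈ T := by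
  have h := hT.2.2.1 0 Fin.elim0 fun i => i.elim0
  exact hT.mem_of_surjective (f := 0) (fun _ => ⟨0, Subsingleton.elim _ _⟩) h

theorem directSum_mem (hT : IsFGTorsionClass A T) {ι : Type} [Fintype ι] {M : ι → Type}
    [∀ i, AddCommGroup (M i)] [∀ i, Module A (M i)] (hM : ∀ i, ModuleCat.of A (M i) ∈ T) :
    ModuleCat.of A (DirectSum ι M) ∈ T := by
  let e := (Fintype.equivFin ι).symm
  exact hT.mem_of_linearEquiv (DirectSum.lequivCongrLeft A e.symm).symm
    (hT.2.2.1 _ (fun j => .of A (M (e j))) fun j => hM (e j))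

theorem zeroModules_subset (hT : IsFGTorsionClass A T) : zeroModules A ⊆ T := fun M hM =>
  have : Subsingleton M := subsingleton_of_forall_eq 0 hM
  hT.mem_of_subsingleton (M := M)

theorem fgModules_subset (hT : IsFGTorsionClass A T) (hA : ModuleCat.of A A ∈ T) :
    fgModules A ⊆ T := by
  intro M (hM : Module.Finite A M)
  obtain ⟨n, f, hf⟩ := Module.Finite.exists_fin' A M
  let e := DirectSum.linearEquivFunOnFintype A (Fin n) fun _ => A
  exact hT.mem_of_surjective (f := f ∘ₗ e.toLinearMap) (hf.comp e.surjective)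
    (hT.directSum_mem fun _ => hA)

end Ring

end IsFGTorsionClass

section

variable {A : Type} [Ring A]

theorem isFGTorsionClass_zeroModules : IsFGTorsionClass A (zeroModules A) := by
  refine ⟨fun M hM => ?_, fun M N ⟨e⟩ hM y => ?_, fun n F hF x => ?_, fun M N hM ⟨p, hp⟩ y => ?_,
    fun M B C hM hC ⟨f, g, _, _, hfg⟩ y => ?_⟩
  · have : Subsingleton M := subsingleton_of_forall_eq 0 hM
    infer_instance
  · rw [← e.apply_symm_apply y, hM (e.symm y), map_zero]
  · exact DFinsupp.ext fun i => hF i (x i)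
  · obtain ⟨x, rfl⟩ := hp y
    rw [hM x, map_zero]
  · obtain ⟨x, rfl⟩ : y ∈ LinearMap.range f := hfg ▸ hC (g y)
    rw [hM x, map_zero]

theorem isFGTorsionClass_fgModules : IsFGTorsionClass A (fgModules A) := by
  refine ⟨fun M hM => hM, fun M N ⟨e⟩ (hM : Module.Finite A M) => .equiv e,
    fun n F (hF : ∀ i, Module.Finite A (F i)) => ?_,
    fun M N (hM : Module.Finite A M) ⟨p, hp⟩ => .of_surjective p hp,
    fun M B C (hM : Module.Finite A M) (hC : Module.Finite A C) ⟨f, g, _, hg, hfg⟩ =>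
      .of_exact (LinearMap.exact_iff.2 hfg.symm) hg⟩
  exact .equiv (DirectSum.linearEquivFunOnFintype A (Fin n) fun i => F i).symm

end

theorem isFGTorsionClass_fgTorsionModules {A : Type} [CommRing A] [IsDomain A] :
    IsFGTorsionClass A (fgTorsionModules A) := by
  obtain ⟨-, hiso, hsum, hquot, hext⟩ := isFGTorsionClass_fgModules (A := A)
  refine ⟨fun M hM => hM.1, fun M N hMN hM => ⟨hiso M N hMN hM.1, fun y => ?_⟩,
    fun n F hF => ⟨hsum n F fun i => (hF i).1, fun x => ?_⟩,
    fun M N hM hMN => ⟨hquot M N hM.1 hMN, fun y => ?_⟩,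
    fun M B C hM hC hMBC => ⟨hext M B C hM.1 hC.1 hMBC, fun y => ?_⟩⟩
  · obtain ⟨e⟩ := hMN
    obtain ⟨r, hr, hrx⟩ := hM.2 (e.symm y)
    exact ⟨r, hr, by rw [← e.apply_symm_apply y, ← map_smul, hrx, map_zero]⟩
  · choose r hr0 hr using fun i => (hF i).2 (x i)
    refine ⟨∏ i, r i, Finset.prod_ne_zero_iff.2 fun i _ => hr0 i, DFinsupp.ext fun i => ?_⟩
    obtain ⟨c, hc⟩ := Finset.dvd_prod_of_mem r (Finset.mem_univ i)
    rw [DirectSum.smul_apply, hc, mul_comm, mul_smul, hr i, smul_zero]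
    rfl
  · obtain ⟨p, hp⟩ := hMN
    obtain ⟨x, rfl⟩ := hp y
    obtain ⟨r, hr, hrx⟩ := hM.2 x
    exact ⟨r, hr, by rw [← map_smul, hrx, map_zero]⟩
  · obtain ⟨f, g, -, -, hfg⟩ := hMBC
    obtain ⟨r, hr, hry⟩ := hC.2 (g y)
    obtain ⟨x, hx⟩ : r • y ∈ LinearMap.range f := by rw [hfg, LinearMap.mem_ker, map_smul, hry]
    obtain ⟨s, hs, hsx⟩ := hM.2 x
    exact ⟨s * r, mul_ne_zero hs hr, by rw [mul_smul, ← hx, ← map_smul, hsx, map_zero]⟩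

section Distinct

variable {A : Type} [CommRing A]

theorem zeroModules_ne_fgModules [Nontrivial A] : zeroModules A ≠ fgModules A := by
  intro h
  have hA : ModuleCat.of A A ∈ zeroModules A := by rw [h]; exact Module.Finite.self A
  exact one_ne_zero (hA 1)

theorem fgModules_ne_fgTorsionModules : fgModules A ≠ fgTorsionModules A := by
  intro h
  have hA : ModuleCat.of A A ∈ fgTorsionModules A := by rw [← h]; exact Module.Finite.self A
  obtain ⟨r, hr, hr1⟩ := hA.2 (1 : A)
  exact hr (by simpa using hr1)

theorem zeroModules_ne_fgTorsionModules {a : A} (ha0 : a ≠ 0) (ha : ¬IsUnit a) :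
    zeroModules A ≠ fgTorsionModules A := by
  intro h
  have hQ : ModuleCat.of A (A ⧸ Ideal.span {a}) ∈ zeroModules A := by
    refine h ▸ ⟨inferInstance, fun y => ⟨a, ha0, ?_⟩⟩
    obtain ⟨z, rfl⟩ := Submodule.Quotient.mk_surjective _ y
    rw [← Submodule.Quotient.mk_smul, Submodule.Quotient.mk_eq_zero, smul_eq_mul]
    exact Ideal.mem_span_singleton.2 (dvd_mul_right a z)
  exact ha (isUnit_of_dvd_one (Ideal.mem_span_singleton.1
    (Ideal.Quotient.eq_zero_iff_mem.1 (hQ 1))))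

end Distinct

theorem exists_surjective_of_forall_smul_ne_zero {A M : Type} [CommRing A] [IsDomain A]
    [IsPrincipalIdealRing A] [AddCommGroup M] [Module A M] [Module.Finite A M] {x : M}
    (hx : ∀ r : A, r ≠ 0 → r • x ≠ 0) : ∃ f : M →ₗ[A] A, Function.Surjective f := by
  have : Module.Free A (M ⧸ Submodule.torsion A M) := Module.free_of_finite_type_torsion_free'
  have : Nontrivial (M ⧸ Submodule.torsion A M) := by
    refine ⟨⟨Submodule.Quotient.mk x, 0, fun hx0 => ?_⟩⟩
    obtain ⟨r, hr⟩ := (Submodule.mem_torsion_iff x).1 ((Submodule.Quotient.mk_eq_zero _).1 hx0)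
    exact hx r (nonZeroDivisors.ne_zero r.2) hr
  let b := Module.Free.chooseBasis A (M ⧸ Submodule.torsion A M)
  obtain ⟨i⟩ := b.index_nonempty
  refine ⟨b.coord i ∘ₗ (Submodule.torsion A M).mkQ, fun r => ?_⟩
  obtain ⟨y, hy⟩ := (Submodule.torsion A M).mkQ_surjective (r • b i)
  exact ⟨y, by simp [hy]⟩

theorem exists_surjective_quotient_maximalIdeal {A M : Type} [CommRing A] [IsLocalRing A]
    [AddCommGroup M] [Module A M] [Module.Finite A M] [Nontrivial M] :
    ∃ f : M →ₗ[A] A ⧸ IsLocalRing.maximalIdeal A, Function.Surjective f := by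
  obtain ⟨N, hN⟩ := IsCoatomic.exists_coatom (Submodule A M)
  have : IsSimpleModule A (M ⧸ N) := isSimpleModule_iff_isCoatom.2 hN
  obtain ⟨I, hI, ⟨e⟩⟩ := isSimpleModule_iff_quot_maximal.1 this
  obtain rfl := IsLocalRing.eq_maximalIdeal hI
  exact ⟨e.toLinearMap ∘ₗ N.mkQ, e.surjective.comp N.mkQ_surjective⟩

namespace IsFGTorsionClass

variable {A : Type} [CommRing A] {T : Set (ModuleCat.{0} A)}

open scoped Pointwise in
theorem quotient_span_pow_mem (hT : IsFGTorsionClass A T) {a : A} (ha : a ∈ nonZeroDivisors A)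
    (h : ModuleCat.of A (A ⧸ Ideal.span {a}) ∈ T) (k : ℕ) :
    ModuleCat.of A (A ⧸ Ideal.span {a ^ k}) ∈ T := by
  induction k with
  | zero =>
    rw [pow_zero, Ideal.span_singleton_one]
    exact hT.mem_of_subsingleton
  | succ k ih =>
    have hspan : Ideal.span {a ^ (k + 1)} = a • Ideal.span {a ^ k} := by
      rw [← Submodule.ideal_span_singleton_smul, smul_eq_mul,
        Ideal.span_singleton_mul_span_singleton, pow_succ']
    rw [hspan]
    exact hT.mem_of_exact (Ideal.mulQuot_injective _ ha) (Ideal.quotOfMul_surjective _)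
      (Ideal.exact_mulQuot_quotOfMul _) ih h

theorem fgTorsionModules_subset [IsDomain A] [IsDiscreteValuationRing A]
    (hT : IsFGTorsionClass A T) (h : ModuleCat.of A (A ⧸ IsLocalRing.maximalIdeal A) ∈ T) :
    fgTorsionModules A ⊆ T := by
  rintro N ⟨hfin, htors⟩
  have : Module.IsTorsion A N := fun y => by
    obtain ⟨r, hr, hry⟩ := htors y
    exact ⟨⟨r, mem_nonZeroDivisors_of_ne_zero hr⟩, hry⟩
  obtain ⟨ι, _, p, hp, e, ⟨l⟩⟩ := Module.equiv_directSum_of_isTorsion this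
  refine hT.mem_of_linearEquiv l.symm (hT.directSum_mem fun i => ?_)
  refine hT.quotient_span_pow_mem (mem_nonZeroDivisors_of_ne_zero (hp i).ne_zero) ?_ (e i)
  rwa [← (IsDiscreteValuationRing.irreducible_iff_uniformizer _).1 (hp i)]

theorem eq_zeroModules_or_eq_fgModules_or_eq_fgTorsionModules [IsDomain A]
    [IsDiscreteValuationRing A] (hT : IsFGTorsionClass A T) :
    T = zeroModules A ∨ T = fgModules A ∨ T = fgTorsionModules A := by
  by_cases hfree : ∃ M ∈ T, ∃ x : M, ∀ r : A, r ≠ 0 → r • x ≠ 0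
  · obtain ⟨M, hM, x, hx⟩ := hfree
    have := hT.1 M hM
    obtain ⟨f, hf⟩ := exists_surjective_of_forall_smul_ne_zero hx
    exact .inr (.inl (subset_antisymm hT.1 (hT.fgModules_subset (hT.mem_of_surjective hf hM))))
  push Not at hfree
  by_cases hzero : ∃ M ∈ T, ∃ x : M, x ≠ 0
  · obtain ⟨M, hM, x, hx⟩ := hzero
    have := hT.1 M hM
    have : Nontrivial M := nontrivial_of_ne x 0 hx
    obtain ⟨f, hf⟩ := exists_surjective_quotient_maximalIdeal (A := A) (M := M)
    exact .inr (.inr (subset_antisymm (fun N hN => ⟨hT.1 N hN, hfree N hN⟩)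
      (hT.fgTorsionModules_subset (hT.mem_of_surjective hf hM))))
  push Not at hzero
  exact .inl (subset_antisymm hzero hT.zeroModules_subset)

end IsFGTorsionClass

theorem Subring.isLocalization_atPrime_of_mem_iff {R : Subring ℚ} (P : Ideal ℤ) [P.IsPrime]
    (hR : ∀ x : ℚ, x ∈ R ↔ ∃ a b : ℤ, b ∉ P ∧ x = (a : ℚ) / (b : ℚ)) :
    IsLocalization.AtPrime R P where
  map_units s := by
    have hs : ((s : ℤ) : ℚ) ≠ 0 := Int.cast_ne_zero.2 fun h => s.2 (h ▸ P.zero_mem)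
    refine IsUnit.of_mul_eq_one (⟨(1 : ℚ) / s, (hR _).2 ⟨1, s, s.2, by simp⟩⟩ : R) ?_
    ext; simp [hs]
  surj z := by
    obtain ⟨a, b, hb, hz⟩ := (hR z).1 z.2
    have hb0 : (b : ℚ) ≠ 0 := Int.cast_ne_zero.2 fun h => hb (h ▸ P.zero_mem)
    exact ⟨(a, ⟨b, hb⟩), by ext; simp [hz, hb0]⟩
  exists_of_eq {x y} h := ⟨1, by simpa using congrArg ((↑) : R → ℚ) h⟩

theorem Subring.isDiscreteValuationRing_of_mem_iff_odd {R : Subring ℚ}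
    (hR : ∀ x : ℚ, x ∈ R ↔ ∃ a b : ℤ, Odd b ∧ x = (a : ℚ) / (b : ℚ)) :
    IsDiscreteValuationRing R := by
  have : (Ideal.span {(2 : ℤ)}).IsPrime := (Ideal.span_singleton_prime two_ne_zero).2 Int.prime_two
  have : IsLocalization.AtPrime R (Ideal.span {(2 : ℤ)}) :=
    isLocalization_atPrime_of_mem_iff _ fun x => by
      simpa [Ideal.mem_span_singleton, ← even_iff_two_dvd] using hR x
  exact IsLocalization.AtPrime.isDiscreteValuationRing_of_dedekind_domain ℤ
    (P := Ideal.span {2}) (by simp) R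

/-- Over the localisation `R` of `ℤ` at the prime `(2)` (realised as the subring of `ℚ` of
fractions with odd denominator), the only torsion classes of finitely generated modules
are `{0}`, all finitely generated modules, and the finitely generated torsion modules. -/
theorem fg_torsion_classes_of_Z_localised_at_two
    (R : Subring ℚ) (hR : ∀ x : ℚ, x ∈ R ↔ ∃ a b : ℤ, Odd b ∧ x = (a : ℚ) / (b : ℚ)) :
    (IsFGTorsionClass ↥R {M : ModuleCat.{0} ↥R | ∀ x : M, x = 0} ∧
      IsFGTorsionClass ↥R {M : ModuleCat.{0} ↥R | Module.Finite ↥R M} ∧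
      IsFGTorsionClass ↥R
        {M : ModuleCat.{0} ↥R | Module.Finite ↥R M ∧
          ∀ x : M, ∃ r : ↥R, r ≠ 0 ∧ r • x = 0}) ∧
    ({M : ModuleCat.{0} ↥R | ∀ x : M, x = 0} ≠
        {M : ModuleCat.{0} ↥R | Module.Finite ↥R M} ∧
      {M : ModuleCat.{0} ↥R | ∀ x : M, x = 0} ≠
        {M : ModuleCat.{0} ↥R | Module.Finite ↥R M ∧
          ∀ x : M, ∃ r : ↥R, r ≠ 0 ∧ r • x = 0} ∧
      {M : ModuleCat.{0} ↥R | Module.Finite ↥R M} ≠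
        {M : ModuleCat.{0} ↥R | Module.Finite ↥R M ∧
          ∀ x : M, ∃ r : ↥R, r ≠ 0 ∧ r • x = 0}) ∧
    (∀ T : Set (ModuleCat.{0} ↥R), IsFGTorsionClass ↥R T →
      T = {M : ModuleCat.{0} ↥R | ∀ x : M, x = 0} ∨
      T = {M : ModuleCat.{0} ↥R | Module.Finite ↥R M} ∨
      T = {M : ModuleCat.{0} ↥R | Module.Finite ↥R M ∧
            ∀ x : M, ∃ r : ↥R, r ≠ 0 ∧ r • x = 0}) := by
  have : IsDiscreteValuationRing R := Subring.isDiscreteValuationRing_of_mem_iff_odd hR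
  obtain ⟨π, hπ⟩ := IsDiscreteValuationRing.exists_irreducible R
  exact ⟨⟨isFGTorsionClass_zeroModules, isFGTorsionClass_fgModules,
      isFGTorsionClass_fgTorsionModules⟩,
    ⟨zeroModules_ne_fgModules, zeroModules_ne_fgTorsionModules hπ.ne_zero hπ.not_isUnit,
      fgModules_ne_fgTorsionModules⟩,
    fun T hT => hT.eq_zeroModules_or_eq_fgModules_or_eq_fgTorsionModules⟩
end
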